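/- Let K = Matrix.fromBlocks 0 B C D, where the upper-left block is the n×n zero matrix, D : Matrix (Fin m) (Fin m) ℂ is normal (IsStarNormal), B : Matrix (Fin n) (Fin m) ℂ and C : Matrix (Fin m) (Fin n) ℂ, with n, m ≥ 1. Let ρ(D) := the maximum of |μ| over eigenvalues μ ∈ spectrum ℂ D. Then every eigenvalue λ ∈ spectrum ℂ K satisfies |λ| ≤ (ρ(D) + Real.sqrt (ρ(D)^2 + 4·‖B‖·‖C‖)) / 2, where ‖·‖ is the ℓ²-operator norm. -/

import Mathlib

/-!
If `|λ| > ρ(D)`, then `λ - D` is invertible and the Schur complement reduces the eigenvalue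
problem for `K` to `λ ∈ σ(B (λ - D)⁻¹ C)`. Since `D` is normal, `‖(λ - D)⁻¹‖` is the reciprocal
of the distance from `λ` to `σ(D)`, which is at least `|λ| - ρ(D)`. Hence
`|λ| (|λ| - ρ(D)) ≤ ‖B‖ ‖C‖`, and `|λ|` lies below the larger root of the quadratic
`t² - ρ(D) t - ‖B‖ ‖C‖`.
-/

open Matrix

/-- The ℓ²-operator norm of a (rectangular) complex matrix: the operator norm of
the induced linear map between Euclidean spaces. -/
noncomputable def l2OpNorm {m n : Type*} [Fintype m] [Fintype n] [DecidableEq n]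
    (M : Matrix m n ℂ) : ℝ :=
  ‖LinearMap.toContinuousLinearMap (Matrix.toEuclideanLin M)‖

lemma IsStarNormal.norm_resolvent_le {A : Type*} [CStarAlgebra A] {a : A} [IsStarNormal a]
    {z : ℂ} {δ : ℝ} (hδ : 0 < δ) (h : ∀ w ∈ spectrum ℂ a, δ ≤ ‖z - w‖) :
    ‖resolvent a z‖ ≤ δ⁻¹ := by
  have hne : ∀ w ∈ spectrum ℂ a, z - w ≠ 0 := fun w hw ↦ norm_pos_iff.1 (hδ.trans_le (h w hw))
  have hcfc : resolvent a z = cfc (fun w ↦ (z - w)⁻¹) a := by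
    rw [cfc_inv (fun w ↦ z - w) a hne, cfc_sub .., cfc_const z a, cfc_id' ℂ a]
    rfl
  rw [hcfc]
  refine norm_cfc_le (inv_nonneg.2 hδ.le) fun w hw ↦ ?_
  rw [norm_inv]
  exact inv_anti₀ hδ (h w hw)

lemma Matrix.mem_spectrum_fromBlocks_zero_iff {K n m : Type*} [Field K] [Fintype n] [Fintype m]
    [DecidableEq n] [DecidableEq m] (B : Matrix n m K) (C : Matrix m n K) (D : Matrix m m K)
    {z : K} (hz : z ∉ spectrum K D) :
    z ∈ spectrum K (fromBlocks 0 B C D) ↔ z ∈ spectrum K (B * resolvent D z * C) := by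
  rw [spectrum.notMem_iff] at hz
  let := hz.invertible
  have hsplit : algebraMap K _ z - fromBlocks 0 B C D =
      fromBlocks (algebraMap K _ z) (-B) (-C) (algebraMap K _ z - D) := by
    simp [Algebra.algebraMap_eq_smul_one, ← fromBlocks_one, fromBlocks_smul, sub_eq_add_neg,
      fromBlocks_neg, fromBlocks_add]
  have hdet : (algebraMap K _ z - fromBlocks 0 B C D).det =
      (algebraMap K _ z - D).det * (algebraMap K _ z - B * resolvent D z * C).det := by
    rw [hsplit, det_fromBlocks₂₂, resolvent, Ring.inverse_invertible]
    simp [Matrix.neg_mul, Matrix.mul_neg]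
  simp only [spectrum.mem_iff, isUnit_iff_isUnit_det, hdet, IsUnit.mul_iff,
    (isUnit_iff_isUnit_det _).1 hz, true_and]

lemma le_half_add_sqrt_of_mul_sub_le {t ρ p : ℝ} (h : t * (t - ρ) ≤ p) :
    t ≤ (ρ + √(ρ ^ 2 + 4 * p)) / 2 := by
  have : 2 * t - ρ ≤ √(ρ ^ 2 + 4 * p) :=
    (le_abs_self _).trans (Real.abs_le_sqrt (by nlinarith))
  linarith

open scoped Matrix.Norms.L2Operator

theorem specRadius_fromBlocks_zero_quadratic_general {n m : ℕ} (hn : 1 ≤ n)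
    (B : Matrix (Fin n) (Fin m) ℂ) (C : Matrix (Fin m) (Fin n) ℂ)
    (D : Matrix (Fin m) (Fin m) ℂ) (hD : IsStarNormal D)
    (ρD : ℝ) (hρD : IsGreatest ((fun z : ℂ => ‖z‖) '' spectrum ℂ D) ρD)
    (lam : ℂ)
    (hK : lam ∈ spectrum ℂ (Matrix.fromBlocks (0 : Matrix (Fin n) (Fin n) ℂ) B C D)) :
    ‖lam‖ ≤ (ρD + Real.sqrt (ρD ^ 2 + 4 * (l2OpNorm B * l2OpNorm C))) / 2 := by
  have : Nonempty (Fin n) := ⟨⟨0, hn⟩⟩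
  have hρ : ∀ w ∈ spectrum ℂ D, ‖w‖ ≤ ρD := fun w hw ↦ hρD.2 ⟨w, hw, rfl⟩
  refine le_half_add_sqrt_of_mul_sub_le (?_ : ‖lam‖ * (‖lam‖ - ρD) ≤ ‖B‖ * ‖C‖)
  rcases le_or_gt ‖lam‖ ρD with hle | hlt
  · nlinarith [norm_nonneg lam, norm_nonneg B, norm_nonneg C]
  have hgap : 0 < ‖lam‖ - ρD := sub_pos.2 hlt
  have hR : ‖resolvent D lam‖ ≤ (‖lam‖ - ρD)⁻¹ :=
    hD.norm_resolvent_le hgap fun w hw ↦ by linarith [norm_sub_norm_le lam w, hρ w hw]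
  have hSchur : lam ∈ spectrum ℂ (B * resolvent D lam * C) :=
    (mem_spectrum_fromBlocks_zero_iff B C D fun h ↦ hlt.not_ge (hρ lam h)).1 hK
  calc ‖lam‖ * (‖lam‖ - ρD) ≤ ‖B‖ * ‖resolvent D lam‖ * ‖C‖ * (‖lam‖ - ρD) := by
        gcongr
        refine (spectrum.norm_le_norm_of_mem hSchur).trans ?_
        refine (l2_opNorm_mul _ _).trans ?_
        gcongr
        exact l2_opNorm_mul _ _
    _ ≤ ‖B‖ * (‖lam‖ - ρD)⁻¹ * ‖C‖ * (‖lam‖ - ρD) := by gcongr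
    _ = ‖B‖ * ‖C‖ := by field_simp

/-- **Quadratic spectral bound for a block matrix with nilpotent (zero) upper-left
block and normal lower-right block.**  If `ρD` is the maximum modulus of the
eigenvalues of the normal block `D`, then every eigenvalue `λ` of
`K = fromBlocks 0 B C D` satisfies
`|λ| ≤ (ρD + √(ρD² + 4‖B‖‖C‖))/2`. -/
theorem specRadius_fromBlocks_zero_quadratic {n m : ℕ} (hn : 1 ≤ n) (hm : 1 ≤ m)
    (B : Matrix (Fin n) (Fin m) ℂ) (C : Matrix (Fin m) (Fin n) ℂ)
    (D : Matrix (Fin m) (Fin m) ℂ) (hD : IsStarNormal D)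
    (ρD : ℝ) (hρD : IsGreatest ((fun z : ℂ => ‖z‖) '' spectrum ℂ D) ρD)
    (lam : ℂ)
    (hK : lam ∈ spectrum ℂ (Matrix.fromBlocks (0 : Matrix (Fin n) (Fin n) ℂ) B C D)) :
    ‖lam‖ ≤ (ρD + Real.sqrt (ρD ^ 2 + 4 * (l2OpNorm B * l2OpNorm C))) / 2 :=
  specRadius_fromBlocks_zero_quadratic_general hn B C D hD ρD hρD lam hK
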